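/- arXiv:2506.15401 — 4 statements merged into one kernel-verified Lean document; each statement's English description precedes it below -/
import Mathlib

section
/- Let p be a positive odd integer and q an even integer with gcd(p,q) = 1, q ≠ 0. Write q = 2q₀ and set ε_i = (−1)^⌊iq/p⌋ for 1 ≤ i ≤ p−1. Then q₀ · ∑_{i=1}^{p−1} i·ε_i ≡ −(p−1)²/4 (mod p). -/
open Finset

/-- ε_i = (−1)^⌊iq/p⌋ -/
def eps (p q i : ℤ) : ℤ := ((-1 : ℤˣ) ^ ⌊(i * q : ℚ) / (p : ℚ)⌋ : ℤˣ)

/-- d(i) = ∑_{k=1}^{i} ε_k -/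
noncomputable def dd (p q i : ℤ) : ℤ := ∑ k ∈ Finset.Icc 1 i, eps p q k

/-!
Since `q = 2 q₀`, the parity of `⌊i q / p⌋` is that of `⌊2 r / p⌋`, where `r = i q₀ mod p`;
so `ε_i = χ(r)`, where `χ = halfSign p` is `1` below `p / 2` and `-1` above. Modulo `p`
the sum `q₀ ∑ i ε_i` is therefore `∑ r χ(r)` over the residues `r = i q₀ mod p`, which run
over `1, …, p - 1` as `i` does. For `p = 2m + 1` that sum pairs `r ≤ m` with `r + m` and
equals `-m²`.
-/

def halfSign (p r : ℤ) : ℤ := if 2 * r < p then 1 else -1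

lemma two_mul_ediv_of_nonneg_of_lt {p r : ℤ} (hr₀ : 0 ≤ r) (hrp : r < p) :
    2 * r / p = if 2 * r < p then 0 else 1 := by
  split_ifs with h
  · exact Int.ediv_eq_zero_of_lt (by omega) h
  · rw [show 2 * r = (2 * r - p) + 1 * p by ring, Int.add_mul_ediv_right _ _ (by omega),
      Int.ediv_eq_zero_of_lt (by omega) (by omega), zero_add]

lemma eps_two_mul {p : ℤ} (hp : 0 < p) (q₀ i : ℤ) :
    eps p (2 * q₀) i = halfSign p (i * q₀ % p) := by
  have hfloor :
      ⌊(i * (2 * q₀ : ℤ) : ℚ) / p⌋ = 2 * (i * q₀ % p) / p + 2 * (i * q₀ / p) := by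
    rw [Int.floor_div_cast_of_nonneg hp.le, ← Int.cast_mul, Int.floor_intCast,
      show i * (2 * q₀) = 2 * (i * q₀ % p) + 2 * (i * q₀ / p) * p by
        linear_combination (-2) * Int.mul_ediv_add_emod (i * q₀) p,
      Int.add_mul_ediv_right _ _ hp.ne']
  rw [eps, hfloor, zpow_add, (even_two_mul _).neg_one_zpow, mul_one,
    two_mul_ediv_of_nonneg_of_lt (Int.emod_nonneg _ hp.ne') (Int.emod_lt_of_pos _ hp), halfSign]
  split_ifs <;> simp

lemma mul_emod_injOn_Icc {p a : ℤ} (ha : IsCoprime p a) :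
    Set.InjOn (fun i => i * a % p) (Icc 1 (p - 1)) := by
  intro i hi j hj hij
  simp only [coe_Icc, Set.mem_Icc] at hi hj
  have hdvd : p ∣ (i - j) * a := by
    rw [sub_mul]; exact Int.ModEq.dvd hij.symm
  have := Int.eq_zero_of_abs_lt_dvd (ha.dvd_of_dvd_mul_right hdvd) (by rw [abs_lt]; omega)
  omega

lemma image_mul_emod_Icc {p a : ℤ} (hp : 0 < p) (ha : IsCoprime p a) :
    (Icc 1 (p - 1)).image (fun i => i * a % p) = Icc 1 (p - 1) := by
  refine eq_of_subset_of_card_le ?_ (card_image_of_injOn (mul_emod_injOn_Icc ha)).ge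
  intro r hr
  obtain ⟨i, hi, rfl⟩ := mem_image.mp hr
  rw [mem_Icc] at hi ⊢
  have hne : i * a % p ≠ 0 := fun h => by
    have := Int.le_of_dvd (by omega) (ha.dvd_of_dvd_mul_right (Int.dvd_of_emod_eq_zero h))
    omega
  have := Int.emod_nonneg (i * a) hp.ne'
  have := Int.emod_lt_of_pos (i * a) hp
  omega

lemma sum_comp_mul_emod_Icc {M : Type*} [AddCommMonoid M] {p a : ℤ} (hp : 0 < p)
    (ha : IsCoprime p a) (f : ℤ → M) :
    ∑ i ∈ Icc 1 (p - 1), f (i * a % p) = ∑ r ∈ Icc 1 (p - 1), f r := by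
  rw [← sum_image (mul_emod_injOn_Icc ha), image_mul_emod_Icc hp ha]

lemma sum_Icc_mul_halfSign {p : ℤ} (hp : 0 < p) (hodd : Odd p) :
    ∑ r ∈ Icc 1 (p - 1), r * halfSign p r = -((p - 1) ^ 2 / 4) := by
  obtain ⟨m, rfl⟩ := hodd
  have hm : 0 ≤ m := by omega
  have hIcc : Icc 1 (2 * m + 1 - 1) = Ioc 0 m ∪ Ioc m (2 * m) := by
    rw [Ioc_union_Ioc_eq_Ioc hm (by omega)]; ext; simp only [mem_Icc, mem_Ioc]; omega
  have hlow : ∀ r ∈ Ioc 0 m, r * halfSign (2 * m + 1) r = r := fun r hr => by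
    rw [mem_Ioc] at hr; rw [halfSign, if_pos (by omega), mul_one]
  have hhigh : ∀ r ∈ Ioc 0 m,
      (r + m) * halfSign (2 * m + 1) (r + m) = -(r + m) := fun r hr => by
    rw [mem_Ioc] at hr; rw [halfSign, if_neg (by omega), mul_neg_one]
  rw [hIcc, sum_union (disjoint_left.mpr fun r h₁ h₂ => by rw [mem_Ioc] at h₁ h₂; omega),
    show Ioc m (2 * m) = (Ioc 0 m).map (addRightEmbedding m) by
      rw [map_add_right_Ioc]; congr 1 <;> ring,
    sum_map, sum_congr rfl hlow]
  simp only [addRightEmbedding_apply]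
  rw [sum_congr rfl hhigh, ← sum_add_distrib,
    sum_congr rfl fun r _ => show r + -(r + m) = -m by ring, sum_const, Int.card_Ioc,
    sub_zero, nsmul_eq_mul, Int.toNat_of_nonneg hm, add_sub_cancel_right,
    show (2 * m) ^ 2 = 4 * (m * m) by ring, Int.mul_ediv_cancel_left _ four_ne_zero]
  ring

theorem stmt6_general (p q q₀ : ℤ) (hp : 0 < p) (hpodd : Odd p) (hcop : IsCoprime p q)
    (hq : q = 2 * q₀) :
    q₀ * ∑ i ∈ Finset.Icc (1 : ℤ) (p - 1), i * eps p q i ≡ -((p - 1) ^ 2 / 4) [ZMOD p] := by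
  subst hq
  calc q₀ * ∑ i ∈ Icc 1 (p - 1), i * eps p (2 * q₀) i
      = ∑ i ∈ Icc 1 (p - 1), i * q₀ * halfSign p (i * q₀ % p) := by
        rw [mul_sum]
        exact sum_congr rfl fun i _ => by rw [eps_two_mul hp]; ring
    _ ≡ ∑ i ∈ Icc 1 (p - 1), i * q₀ % p * halfSign p (i * q₀ % p) [ZMOD p] :=
        Int.ModEq.sum fun i _ => (Int.mod_modEq _ _).symm.mul_right _
    _ = ∑ r ∈ Icc 1 (p - 1), r * halfSign p r :=
        sum_comp_mul_emod_Icc hp hcop.of_mul_right_right fun r => r * halfSign p r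
    _ = -((p - 1) ^ 2 / 4) := sum_Icc_mul_halfSign hp hpodd

theorem stmt6 (p q q₀ : ℤ) (hp : 0 < p) (hpodd : Odd p) (hcop : IsCoprime p q)
    (hq0 : q ≠ 0) (hq : q = 2 * q₀) :
    q₀ * ∑ i ∈ Finset.Icc (1 : ℤ) (p - 1), i * eps p q i ≡ -((p - 1) ^ 2 / 4) [ZMOD p] :=
  stmt6_general p q q₀ hp hpodd hcop hq
end

section
/- Let p be a positive odd integer and q an even nonzero integer with gcd(p,q) = 1. Set ε_i = (−1)^⌊iq/p⌋ and τ = −∑_{i=1}^{p−1} i·ε_i. Then 2q·τ ≡ 1 (mod p), i.e., τ is congruent modulo p to the inverse of 2q in ℤ/pℤ. -/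
open Finset

/-!
Write `i q = p ⌊iq/p⌋ + r_i` with `0 ≤ r_i < p`. As `iq` is even and `p` is odd, `⌊iq/p⌋` and
`r_i` have the same parity, so `ε_i = (-1)^{r_i}`. Hence `q ∑ i ε_i ≡ ∑ r_i (-1)^{r_i} (mod p)`,
and since `i ↦ r_i` permutes `{1, …, p-1}`, the right-hand side is
`∑_{r=1}^{p-1} r (-1)^r = (p-1)/2`. Multiplying by `-2` gives `2q τ ≡ 1 - p ≡ 1`.
-/

theorem Int.floor_intCast_div_intCast_of_nonneg (n : ℤ) {d : ℤ} (hd : 0 ≤ d) :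
    ⌊(n : ℚ) / d⌋ = n / d := by
  lift d to ℕ using hd
  exact Rat.floor_intCast_div_natCast n d

theorem Int.even_ediv_iff_even_emod {n p : ℤ} (hp : Odd p) (hn : Even n) :
    Even (n / p) ↔ Even (n % p) := by
  rw [← Int.mul_ediv_add_emod n p, Int.even_add, Int.even_mul] at hn
  simpa [Int.not_even_iff_odd.mpr hp] using hn

theorem eps_eq_ite_even_ediv {p q : ℤ} (i : ℤ) (hp : 0 < p) :
    eps p q i = if Even (i * q / p) then 1 else -1 := by
  rw [eps, ← Int.cast_mul, Int.floor_intCast_div_intCast_of_nonneg _ hp.le]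
  split_ifs with h
  · simp [h.neg_one_zpow]
  · simp [(Int.not_even_iff_odd.mp h).neg_one_zpow]

theorem eps_eq_ite_even_emod {p q : ℤ} (i : ℤ) (hp : 0 < p) (hpodd : Odd p) (hqeven : Even q) :
    eps p q i = if Even (i * q % p) then 1 else -1 := by
  rw [eps_eq_ite_even_ediv i hp]
  exact if_congr (Int.even_ediv_iff_even_emod hpodd (hqeven.mul_left i)) rfl rfl

theorem sum_Icc_mul_ite_even (m : ℕ) :
    ∑ r ∈ Icc (1 : ℤ) (2 * m), r * (if Even r then 1 else -1) = m := by
  induction m with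
  | zero => simp
  | succ m ih =>
    have hIcc : Icc (1 : ℤ) (2 * ↑(m + 1)) =
        insert (2 * (m : ℤ) + 2) (insert (2 * (m : ℤ) + 1) (Icc 1 (2 * (m : ℤ)))) := by
      ext a
      simp only [mem_Icc, mem_insert]
      push_cast
      omega
    have hodd : ¬Even (2 * (m : ℤ) + 1) := Int.not_even_iff_odd.mpr (odd_two_mul_add_one _)
    rw [hIcc, sum_insert (by simp), sum_insert (by simp), ih, if_pos (by simp [parity_simps]),
      if_neg hodd]
    push_cast
    ring

theorem Int.emod_mem_Icc_of_isCoprime {p w i : ℤ} (hp : 0 < p) (hw : IsCoprime p w)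
    (hi : i ∈ Icc 1 (p - 1)) : i * w % p ∈ Icc 1 (p - 1) := by
  rw [mem_Icc] at hi ⊢
  have hne : i * w % p ≠ 0 := fun h ↦ by
    have := Int.le_of_dvd (by omega) (hw.dvd_of_dvd_mul_right (Int.dvd_of_emod_eq_zero h))
    omega
  have := Int.emod_nonneg (i * w) hp.ne'
  have := Int.emod_lt_of_pos (i * w) hp
  omega

theorem Int.emod_mul_emod_mul_of_mul_modEq_one {p a b i : ℤ} (hab : a * b ≡ 1 [ZMOD p])
    (hi₀ : 0 ≤ i) (hip : i < p) : i * a % p * b % p = i := by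
  have h : i * a % p * b ≡ i [ZMOD p] :=
    calc i * a % p * b ≡ i * (a * b) [ZMOD p] := by
          rw [← mul_assoc]; exact (Int.mod_modEq _ _).mul_right b
      _ ≡ i * 1 [ZMOD p] := hab.mul_left i
      _ = i := mul_one i
  exact h.eq.trans (Int.emod_eq_of_lt hi₀ hip)

theorem sum_Icc_comp_mul_emod {M : Type*} [AddCommMonoid M] {p q : ℤ} (hp : 0 < p)
    (hcop : IsCoprime p q) (f : ℤ → M) :
    ∑ i ∈ Icc 1 (p - 1), f (i * q % p) = ∑ i ∈ Icc 1 (p - 1), f i := by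
  have ⟨u, v, huv⟩ := hcop
  have hqv : q * v ≡ 1 [ZMOD p] := Int.modEq_iff_dvd.mpr ⟨u, by linarith⟩
  have hvq : v * q ≡ 1 [ZMOD p] := mul_comm q v ▸ hqv
  refine sum_nbij' (· * q % p) (· * v % p)
    (fun i hi ↦ Int.emod_mem_Icc_of_isCoprime hp hcop hi)
    (fun r hr ↦ Int.emod_mem_Icc_of_isCoprime hp ⟨u, q, by linarith⟩ hr)
    (fun i hi ↦ ?_) (fun r hr ↦ ?_) (fun _ _ ↦ rfl)
  · rw [mem_Icc] at hi
    exact Int.emod_mul_emod_mul_of_mul_modEq_one hqv (by omega) (by omega)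
  · rw [mem_Icc] at hr
    exact Int.emod_mul_emod_mul_of_mul_modEq_one hvq (by omega) (by omega)

theorem mul_sum_mul_eps_modEq {p q : ℤ} (hp : 0 < p) (hpodd : Odd p) (hqeven : Even q)
    (hcop : IsCoprime p q) :
    q * ∑ i ∈ Icc 1 (p - 1), i * eps p q i ≡ (p - 1) / 2 [ZMOD p] := by
  calc q * ∑ i ∈ Icc 1 (p - 1), i * eps p q i
      = ∑ i ∈ Icc 1 (p - 1), i * q * eps p q i := by
        rw [mul_sum]; exact sum_congr rfl fun i _ ↦ by ring
    _ ≡ ∑ i ∈ Icc 1 (p - 1), i * q % p * eps p q i [ZMOD p] :=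
        Int.ModEq.sum fun i _ ↦ (Int.mod_modEq _ _).symm.mul_right _
    _ = ∑ i ∈ Icc 1 (p - 1), i * q % p * (if Even (i * q % p) then 1 else -1) :=
        sum_congr rfl fun i _ ↦ by rw [eps_eq_ite_even_emod i hp hpodd hqeven]
    _ = ∑ r ∈ Icc 1 (p - 1), r * (if Even r then 1 else -1) :=
        sum_Icc_comp_mul_emod hp hcop fun r ↦ r * (if Even r then 1 else -1)
    _ = (p - 1) / 2 := by
        obtain ⟨m, hm⟩ := hpodd
        lift m to ℕ using by omega
        rw [show p - 1 = 2 * (m : ℤ) by omega, sum_Icc_mul_ite_even]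
        omega

theorem stmt7_general (p q : ℤ) (hp : 0 < p) (hpodd : Odd p) (hqeven : Even q)
    (hcop : IsCoprime p q) :
    2 * q * (-∑ i ∈ Finset.Icc (1 : ℤ) (p - 1), i * eps p q i) ≡ 1 [ZMOD p] := by
  have hp_sub_one : -2 * ((p - 1) / 2) = 1 - p := by
    obtain ⟨m, rfl⟩ := hpodd
    omega
  calc 2 * q * (-∑ i ∈ Icc (1 : ℤ) (p - 1), i * eps p q i)
      = -2 * (q * ∑ i ∈ Icc (1 : ℤ) (p - 1), i * eps p q i) := by ring
    _ ≡ -2 * ((p - 1) / 2) [ZMOD p] := (mul_sum_mul_eps_modEq hp hpodd hqeven hcop).mul_left _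
    _ = 1 - p := hp_sub_one
    _ ≡ 1 [ZMOD p] := Int.modEq_iff_dvd.mpr ⟨1, by ring⟩

theorem stmt7 (p q : ℤ) (hp : 0 < p) (hpodd : Odd p) (hqeven : Even q)
    (hq0 : q ≠ 0) (hcop : IsCoprime p q) :
    2 * q * (-∑ i ∈ Finset.Icc (1 : ℤ) (p - 1), i * eps p q i) ≡ 1 [ZMOD p] :=
  stmt7_general p q hp hpodd hqeven hcop
end

section
/- Let p be a positive odd integer with p > 1 and q an even integer with |q| > 1, gcd(p,q) = 1. Set ε_i = (−1)^⌊iq/p⌋ and τ = −∑_{i=1}^{p−1} i·ε_i. Then τ is not divisible by p. -/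
open Finset

/-!
Let `r_i` be the balanced residue of `i q` modulo `2p`, so `-p ≤ r_i < p`. Then `ε_i` is the sign
of `r_i`, hence `i ε_i q ≡ |r_i| (mod p)`. As `q` is even and prime to `p`, `i ↦ r_i` maps
`{1, …, p - 1}` bijectively onto the nonzero even integers in `(-p, p)`, so with `p = 2k + 1` we
get `q ∑ i ε_i ≡ 2k(k + 1) (mod p)`. If `p` divided `τ`, it would divide `4k(k + 1) = p² - 1`.
-/

theorem Int.even_bmod_two_mul {a : ℤ} (ha : Even a) (n : ℕ) : Even (a.bmod (2 * n)) := by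
  rw [Int.bmod_eq_self_sub_mul_bdiv]
  push_cast
  exact ha.sub (even_two_mul _ |>.mul_right _)

theorem Int.ediv_eq_bmod_two_mul_ediv_add (a : ℤ) {n : ℕ} (hn : 0 < n) :
    a / n = a.bmod (2 * n) / n + 2 * a.bdiv (2 * n) := by
  conv_lhs => rw [← Int.bmod_add_bdiv a (2 * n)]
  push_cast
  rw [show (2 * n : ℤ) * a.bdiv (2 * n) = 2 * a.bdiv (2 * n) * n by ring,
    Int.add_mul_ediv_right _ _ (by exact_mod_cast hn.ne')]

theorem Int.abs_bmod_modEq (a : ℤ) (m : ℕ) :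
    |a.bmod m| ≡ a * (if 0 ≤ a.bmod m then 1 else -1) [ZMOD m] := by
  have hbmod : a.bmod m ≡ a [ZMOD m] := Int.modEq_iff_dvd.2 Int.dvd_self_sub_bmod
  split_ifs with h
  · simpa [abs_of_nonneg h] using hbmod
  · simpa [abs_of_neg (not_le.1 h)] using hbmod.neg

theorem eps_eq_ite_bmod {n : ℕ} (hn : 0 < n) (q i : ℤ) :
    eps n q i = if 0 ≤ (i * q).bmod (2 * n) then 1 else -1 := by
  have hfloor : ⌊(i * q : ℚ) / ((n : ℤ) : ℚ)⌋ = i * q / n := by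
    exact_mod_cast Rat.floor_intCast_div_natCast (i * q) n
  have hlt := Int.bmod_lt (x := i * q) (m := 2 * n) (by omega)
  have hle := Int.le_bmod (x := i * q) (m := 2 * n) (by omega)
  push_cast at hlt hle
  rw [eps, hfloor, Int.ediv_eq_bmod_two_mul_ediv_add _ hn, zpow_add,
    (even_two_mul _).neg_one_zpow, mul_one]
  split_ifs with h
  · rw [Int.ediv_eq_zero_of_lt h (by omega)]
    rfl
  · rw [Int.ediv_eq_neg_one_of_neg_of_le (by omega) (by omega)]
    rfl

theorem mul_eps_mul_modEq {n : ℕ} (hn : 0 < n) (q i : ℤ) :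
    i * eps n q i * q ≡ |(i * q).bmod (2 * n)| [ZMOD n] := by
  have h := (Int.abs_bmod_modEq (i * q) (2 * n)).symm
  rw [← eps_eq_ite_bmod hn] at h
  push_cast at h
  rw [mul_right_comm]
  exact h.of_mul_left 2

theorem sum_abs_Icc_neg_self {k : ℤ} (hk : 0 ≤ k) : ∑ j ∈ Icc (-k) k, |j| = k * (k + 1) := by
  induction k, hk using Int.leInduction with
  | base => simp
  | succ m hm ih =>
    have hIcc : Icc (-(m + 1)) (m + 1) = insert (-(m + 1)) (insert (m + 1) (Icc (-m) m)) := by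
      ext j
      simp only [mem_Icc, mem_insert]
      omega
    rw [hIcc, sum_insert (by simp; omega), sum_insert (by simp), ih, abs_of_neg (by omega),
      abs_of_nonneg (by omega)]
    ring

section HalfResidues

variable {n : ℕ} {k q : ℤ}

theorem bmod_mul_ediv_two_mem (hk : (n : ℤ) = 2 * k + 1) (hq : Even q) (hcop : IsCoprime (n : ℤ) q)
    {i : ℤ} (hi : i ∈ Icc 1 (n - 1 : ℤ)) : (i * q).bmod (2 * n) / 2 ∈ (Icc (-k) k).erase 0 := by
  rw [mem_Icc] at hi
  have hlt := Int.bmod_lt (x := i * q) (m := 2 * n) (by omega)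
  have hle := Int.le_bmod (x := i * q) (m := 2 * n) (by omega)
  push_cast at hlt hle
  obtain ⟨c, hc⟩ := Int.even_bmod_two_mul (hq.mul_left i) n
  have hne : (i * q).bmod (2 * n) ≠ 0 := by
    intro h0
    have hdvd : (n : ℤ) ∣ i * q :=
      (dvd_mul_left _ 2).trans (by exact_mod_cast Int.dvd_of_bmod_eq_zero h0)
    have := Int.le_of_dvd (by omega) (hcop.dvd_of_dvd_mul_right hdvd)
    omega
  simp only [mem_erase, mem_Icc]
  omega

theorem injOn_bmod_mul_ediv_two (hq : Even q) (hcop : IsCoprime (n : ℤ) q) :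
    Set.InjOn (fun i : ℤ => (i * q).bmod (2 * n) / 2) (Icc 1 (n - 1 : ℤ)) := by
  intro a ha b hb hab
  simp only [coe_Icc, Set.mem_Icc] at ha hb
  have hbmod : (a * q).bmod (2 * n) = (b * q).bmod (2 * n) := by
    rw [← Int.two_mul_ediv_two_of_even (Int.even_bmod_two_mul (hq.mul_left a) n),
      ← Int.two_mul_ediv_two_of_even (Int.even_bmod_two_mul (hq.mul_left b) n)]
    exact congrArg (2 * ·) hab
  have hdvd : (n : ℤ) ∣ (a - b) * q := by
    have := Int.dvd_of_bmod_eq_zero (Int.bmod_eq_bmod_iff_bmod_sub_eq_zero.1 hbmod)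
    push_cast at this
    exact (dvd_mul_left _ 2).trans (by rwa [sub_mul])
  have := Int.eq_zero_of_abs_lt_dvd (hcop.dvd_of_dvd_mul_right hdvd) (by rw [abs_lt]; omega)
  omega

theorem sum_abs_bmod_mul (hk : (n : ℤ) = 2 * k + 1) (hq : Even q) (hcop : IsCoprime (n : ℤ) q) :
    ∑ i ∈ Icc 1 (n - 1 : ℤ), |(i * q).bmod (2 * n)| = 2 * ∑ j ∈ Icc (-k) k, |j| := by
  set f : ℤ → ℤ := fun i => (i * q).bmod (2 * n) / 2
  have hf : ∀ i, (i * q).bmod (2 * n) = 2 * f i := fun i =>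
    (Int.two_mul_ediv_two_of_even (Int.even_bmod_two_mul (hq.mul_left i) n)).symm
  have hinj := injOn_bmod_mul_ediv_two hq hcop
  have himage : (Icc 1 (n - 1 : ℤ)).image f = (Icc (-k) k).erase 0 := by
    refine eq_of_subset_of_card_le
      (image_subset_iff.2 fun i hi => bmod_mul_ediv_two_mem hk hq hcop hi) ?_
    rw [card_image_of_injOn hinj, card_erase_of_mem (by simp; omega), Int.card_Icc, Int.card_Icc]
    omega
  calc ∑ i ∈ Icc 1 (n - 1 : ℤ), |(i * q).bmod (2 * n)|
      = 2 * ∑ j ∈ (Icc 1 (n - 1 : ℤ)).image f, |j| := by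
        simp only [hf, abs_mul, abs_two, ← mul_sum]
        rw [sum_image hinj]
    _ = 2 * ∑ j ∈ Icc (-k) k, |j| := by rw [himage, sum_erase _ abs_zero]

end HalfResidues

theorem stmt13_general (p q : ℤ) (hp : 1 < p) (hpodd : Odd p) (hqeven : Even q)
    (hcop : IsCoprime p q) :
    ¬ (p ∣ (-∑ i ∈ Finset.Icc (1 : ℤ) (p - 1), i * eps p q i)) := by
  lift p to ℕ using (by omega)
  obtain ⟨k, hk⟩ := hpodd
  rw [dvd_neg]
  intro hdvd
  have hmodEq : (∑ i ∈ Icc (1 : ℤ) (p - 1), i * eps p q i) * q ≡ 2 * (k * (k + 1)) [ZMOD p] := by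
    rw [← sum_abs_Icc_neg_self (by omega), ← sum_abs_bmod_mul hk hqeven hcop, sum_mul]
    exact Int.ModEq.sum fun i _ => mul_eps_mul_modEq (by omega) q i
  have hsum : (p : ℤ) ∣ 2 * (k * (k + 1)) :=
    (Int.ModEq.dvd_iff hmodEq).1 (dvd_mul_of_dvd_left hdvd q)
  have hone : (p : ℤ) ∣ 1 := by
    rw [show (1 : ℤ) = p * p - 2 * (2 * (k * (k + 1))) by rw [hk]; ring]
    exact dvd_sub (dvd_mul_right _ _) (dvd_mul_of_dvd_right hsum 2)
  have := Int.le_of_dvd one_pos hone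
  omega

theorem stmt13 (p q : ℤ) (hp : 1 < p) (hpodd : Odd p) (hqeven : Even q)
    (hq : 1 < |q|) (hcop : IsCoprime p q) :
    ¬ (p ∣ (-∑ i ∈ Finset.Icc (1 : ℤ) (p - 1), i * eps p q i)) :=
  stmt13_general p q hp hpodd hqeven hcop
end

section
/- Let p be a positive odd integer and q an even integer coprime to p, and let Δ(t) = 1 + ∑_{i=1}^{p−1} (−1)^i t^{d(i)} ∈ ℤ[t^{±1}], where d(i) = ∑_{k=1}^{i} (−1)^⌊kq/p⌋. Writing Δ(t) = ∑_k a_k t^k, one has a_k = (−1)^k·|a_k| for every k, and ∑_k |a_k| = |Δ(−1)| = p. -/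
open Finset

/-- The coefficient of t^k in Δ(t) = ∑_{i=0}^{p−1} (−1)^i t^{d(i)} = 1 + ∑_{i=1}^{p−1} (−1)^i t^{d(i)}. -/
noncomputable def aC (p q k : ℤ) : ℤ :=
  ∑ i ∈ Finset.Icc (0 : ℤ) (p - 1), if dd p q i = k then (((-1 : ℤˣ) ^ i : ℤˣ) : ℤ) else 0

/-
Each ε_k is ±1, hence odd, so d(i) ≡ i (mod 2) for i ≥ 0. Thus every index i contributing to the
coefficient of t^k has (−1)^i = (−1)^k, and a_k is (−1)^k times the number of i ∈ [0, p − 1] with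
d(i) = k. Summing |a_k| counts all p indices once, and every term of Δ(−1) is (−1)^i (−1)^{d(i)} = 1.
-/

lemma even_sum_sub_card_of_odd {ι : Type*} (s : Finset ι) (f : ι → ℤ)
    (hf : ∀ i ∈ s, Odd (f i)) : Even (∑ i ∈ s, f i - #s) := by
  have hsub : ∑ i ∈ s, f i - #s = ∑ i ∈ s, (f i - 1) := by
    simp only [sum_sub_distrib, sum_const, nsmul_one]
  rw [hsub]
  exact even_sum _ fun i hi => (hf i hi).sub_odd odd_one

lemma card_Icc_zero_sub_one {p : ℤ} (hp : 0 ≤ p) : ((#(Icc 0 (p - 1)) : ℕ) : ℤ) = p := by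
  rw [Int.card_Icc]; omega

section

variable (p q : ℤ)

lemma odd_eps (k : ℤ) : Odd (eps p q k) := by
  rcases Int.units_eq_one_or ((-1 : ℤˣ) ^ ⌊(k * q : ℚ) / (p : ℚ)⌋) with h | h <;>
    simp [eps, h]

lemma neg_one_zpow_dd {i : ℤ} (hi : 0 ≤ i) : (-1 : ℤˣ) ^ dd p q i = (-1 : ℤˣ) ^ i := by
  have hcard : ((#(Icc 1 i) : ℕ) : ℤ) = i := by
    rw [Int.card_Icc, add_sub_cancel_right, Int.toNat_of_nonneg hi]
  have := even_sum_sub_card_of_odd (Icc 1 i) (eps p q) fun k _ => odd_eps p q k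
  rw [hcard] at this
  exact (Int.negOnePow_eq_iff _ _).2 this

lemma aC_eq_neg_one_zpow_mul_card (k : ℤ) :
    aC p q k = (((-1 : ℤˣ) ^ k : ℤˣ) : ℤ) * #{i ∈ Icc 0 (p - 1) | dd p q i = k} := by
  rw [aC, ← sum_filter, mul_comm, ← nsmul_eq_mul, ← sum_const]
  refine sum_congr rfl fun i hi => ?_
  obtain ⟨hmem, hk⟩ := mem_filter.1 hi
  rw [← hk, neg_one_zpow_dd p q (mem_Icc.1 hmem).1]

lemma abs_aC (k : ℤ) : |aC p q k| = #{i ∈ Icc 0 (p - 1) | dd p q i = k} := by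
  rw [aC_eq_neg_one_zpow_mul_card, abs_mul, ← Int.negOnePow_def, Int.abs_negOnePow, one_mul,
    Nat.abs_cast]

lemma sum_abs_aC (hp : 0 ≤ p) : ∑ k ∈ (Icc 0 (p - 1)).image (dd p q), |aC p q k| = p := by
  simp only [abs_aC, ← Nat.cast_sum, ← card_eq_sum_card_image, card_Icc_zero_sub_one hp]

lemma sum_neg_one_zpow_mul_neg_one_zpow_dd (hp : 0 ≤ p) :
    ∑ i ∈ Icc 0 (p - 1), (((-1 : ℤˣ) ^ i : ℤˣ) : ℤ) * (((-1 : ℤˣ) ^ dd p q i : ℤˣ) : ℤ) = p := by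
  have hterm : ∀ i ∈ Icc 0 (p - 1),
      (((-1 : ℤˣ) ^ i : ℤˣ) : ℤ) * (((-1 : ℤˣ) ^ dd p q i : ℤˣ) : ℤ) = 1 := fun i hi => by
    rw [neg_one_zpow_dd p q (mem_Icc.1 hi).1, ← Units.val_mul, Int.units_mul_self, Units.val_one]
  rw [sum_congr rfl hterm, sum_const, nsmul_one, card_Icc_zero_sub_one hp]

end

theorem stmt18_general (p q : ℤ) (hp : 0 < p) :
    (∀ k : ℤ, aC p q k = (((-1 : ℤˣ) ^ k : ℤˣ) : ℤ) * |aC p q k|) ∧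
    (∑ k ∈ (Finset.Icc (0 : ℤ) (p - 1)).image (dd p q), |aC p q k|
      = |∑ i ∈ Finset.Icc (0 : ℤ) (p - 1),
          (((-1 : ℤˣ) ^ i : ℤˣ) : ℤ) * (((-1 : ℤˣ) ^ dd p q i : ℤˣ) : ℤ)|) ∧
    (∑ k ∈ (Finset.Icc (0 : ℤ) (p - 1)).image (dd p q), |aC p q k| = p) := by
  refine ⟨fun k => ?_, ?_, sum_abs_aC p q hp.le⟩
  · rw [abs_aC, aC_eq_neg_one_zpow_mul_card]
  · rw [sum_abs_aC p q hp.le, sum_neg_one_zpow_mul_neg_one_zpow_dd p q hp.le, abs_of_pos hp]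

theorem stmt18 (p q : ℤ) (hp : 0 < p) (hpodd : Odd p) (hqeven : Even q)
    (hcop : IsCoprime p q) :
    (∀ k : ℤ, aC p q k = (((-1 : ℤˣ) ^ k : ℤˣ) : ℤ) * |aC p q k|) ∧
    (∑ k ∈ (Finset.Icc (0 : ℤ) (p - 1)).image (dd p q), |aC p q k|
      = |∑ i ∈ Finset.Icc (0 : ℤ) (p - 1),
          (((-1 : ℤˣ) ^ i : ℤˣ) : ℤ) * (((-1 : ℤˣ) ^ dd p q i : ℤˣ) : ℤ)|) ∧
    (∑ k ∈ (Finset.Icc (0 : ℤ) (p - 1)).image (dd p q), |aC p q k| = p) :=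
  stmt18_general p q hp
end
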